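/- Let A be a finite abelian group with a nondegenerate quadratic function q, and let (B,β) be a Schellekens pair for (A,q). Consider the maps ι : Γ(B,β) → A × B, ι(u,v) = (u, uv) (note that uv ∈ B for every (u,v) ∈ Γ(B,β)), and p : A × B → B̂, p(a,b) = (c ↦ σ(c,a)β(c,b)⁻¹), where B̂ = Hom(B,ℂˣ) is the dual group of B. Then ι is an injective group homomorphism, p is a surjective group homomorphism, and the image of ι equals the kernel of p; that is, Γ(B,β) → A × B → B̂ is a short exact sequence. -/

import Mathlib

/-!
Exactness at `A × B` is the defining condition of `Γ(B,β)`, and `ι` is injective because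
`(u, v) ↦ (u, uv)` is. For the surjectivity of `p`: nondegeneracy makes `a ↦ σ(-, a)` injective,
hence an isomorphism `A ≅ Â` since a finite abelian group and its dual have the same order, and
every character of `B` extends to `A`; so already `a ↦ p(a, 1)` is onto `B̂`.
-/

/-- The bicharacter `σ(a,b) = q(ab) q(a)⁻¹ q(b)⁻¹` associated to `q`. -/
def qSigma {A : Type*} [CommGroup A] (q : A → ℂˣ) (a b : A) : ℂˣ :=
  q (a * b) * (q a)⁻¹ * (q b)⁻¹

/-- `q` is a quadratic function: `q(a⁻¹) = q(a)` and the associated `σ` is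
multiplicative in each argument. -/
def IsQuadratic {A : Type*} [CommGroup A] (q : A → ℂˣ) : Prop :=
  (∀ a : A, q a⁻¹ = q a) ∧
  (∀ a b c : A, qSigma q (a * b) c = qSigma q a c * qSigma q b c) ∧
  (∀ a b c : A, qSigma q a (b * c) = qSigma q a b * qSigma q a c)

/-- `q` is nondegenerate: for every `a ≠ 1` the homomorphism `σ(a,−)` is nontrivial. -/
def IsNondeg {A : Type*} [CommGroup A] (q : A → ℂˣ) : Prop :=
  ∀ a : A, a ≠ 1 → ∃ b : A, qSigma q a b ≠ 1

/-- `(B, β)` is a Schellekens pair for `(A, q)`: `β` is symmetric, multiplicative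
in each argument, and `β(b,b) = q(b)` on the subgroup `B`. -/
def IsSchellekens {A : Type*} [CommGroup A] (q : A → ℂˣ) (B : Subgroup A)
    (β : B → B → ℂˣ) : Prop :=
  (∀ b c : B, β b c = β c b) ∧
  (∀ b c d : B, β (b * c) d = β b d * β c d) ∧
  (∀ b c d : B, β b (c * d) = β b c * β b d) ∧
  (∀ b : B, β b b = q (b : A))

/-- `Γ(B,β) = {(a, a⁻¹ b) | a ∈ A, b ∈ B, σ(c,a) = β(c,b) ∀ c ∈ B}` as a subset of `A × A`. -/
def GammaSet {A : Type*} [CommGroup A] (q : A → ℂˣ) (B : Subgroup A)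
    (β : B → B → ℂˣ) : Set (A × A) :=
  {z | ∃ b : B, z.2 = z.1⁻¹ * (b : A) ∧ ∀ c : B, qSigma q (c : A) z.1 = β c b}

/-- The bicharacter `τ((a,b),(c,d)) = σ(a,c) σ(b,d)⁻¹` on `A × A`
associated to the quadratic function `q × q⁻¹`. -/
def qTau {A : Type*} [CommGroup A] (q : A → ℂˣ) (z w : A × A) : ℂˣ :=
  qSigma q z.1 w.1 * (qSigma q z.2 w.2)⁻¹

theorem qSigma_comm {A : Type*} [CommGroup A] (q : A → ℂˣ) (a b : A) :
    qSigma q a b = qSigma q b a := by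
  rw [qSigma, qSigma, mul_comm a b, mul_right_comm]

section Characters

variable {A : Type*} [CommGroup A] {q : A → ℂˣ}

def IsQuadratic.sigmaHom (hq : IsQuadratic q) : A →* A →* ℂˣ :=
  MonoidHom.mk' (fun a ↦ MonoidHom.mk' (fun c ↦ qSigma q c a) fun c d ↦ hq.2.1 c d a)
    fun a b ↦ MonoidHom.ext fun c ↦ hq.2.2 c a b

@[simp]
theorem IsQuadratic.sigmaHom_apply (hq : IsQuadratic q) (a c : A) :
    hq.sigmaHom a c = qSigma q c a :=
  rfl

theorem IsNondeg.sigmaHom_bijective [Finite A] (hq : IsQuadratic q) (hnd : IsNondeg q) :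
    Function.Bijective hq.sigmaHom := by
  have : NeZero (Monoid.exponent A) := ⟨Monoid.exponent_ne_zero_of_finite⟩
  have hinj : Function.Injective hq.sigmaHom := by
    refine (injective_iff_map_eq_one _).mpr fun a ha ↦ ?_
    by_contra hne
    obtain ⟨b, hb⟩ := hnd a hne
    exact hb (by simpa [qSigma_comm q b a] using DFunLike.congr_fun ha b)
  obtain ⟨e⟩ := CommGroup.monoidHom_mulEquiv_of_hasEnoughRootsOfUnity A ℂ
  exact ⟨hinj, (Finite.injective_iff_surjective_of_equiv e.symm.toEquiv).mp hinj⟩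

variable {B : Subgroup A} {β : B → B → ℂˣ}

def IsSchellekens.betaHom (hβ : IsSchellekens q B β) : B →* B →* ℂˣ :=
  MonoidHom.mk' (fun b ↦ MonoidHom.mk' (fun c ↦ β c b) fun c d ↦ hβ.2.1 c d b)
    fun b b' ↦ MonoidHom.ext fun c ↦ hβ.2.2.1 c b b'

def gammaProj (hq : IsQuadratic q) (hβ : IsSchellekens q B β) : A × B →* B →* ℂˣ :=
  ((MonoidHom.domRestrictHom B ℂˣ).comp hq.sigmaHom).coprod hβ.betaHom⁻¹

theorem gammaProj_apply (hq : IsQuadratic q) (hβ : IsSchellekens q B β) (a : A) (b c : B) :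
    gammaProj hq hβ (a, b) c = qSigma q c a * (β c b)⁻¹ :=
  rfl

theorem gammaProj_surjective [Finite A] (hq : IsQuadratic q) (hnd : IsNondeg q)
    (hβ : IsSchellekens q B β) : Function.Surjective (gammaProj hq hβ) := by
  have : NeZero (Monoid.exponent A) := ⟨Monoid.exponent_ne_zero_of_finite⟩
  intro χ
  obtain ⟨a, rfl⟩ := ((MonoidHom.domRestrict_surjective ℂ B).comp
    (hnd.sigmaHom_bijective hq).2) χ
  exact ⟨(a, 1), by simp [gammaProj]⟩

theorem gammaProj_eq_one_iff (hq : IsQuadratic q) (hβ : IsSchellekens q B β) (a : A) (b : B) :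
    gammaProj hq hβ (a, b) = 1 ↔ ∀ c : B, qSigma q c a = β c b := by
  simp only [DFunLike.ext_iff, gammaProj_apply, MonoidHom.one_apply, mul_inv_eq_one]

end Characters

section Gamma

variable {A : Type*} [CommGroup A] {B : Subgroup A}

theorem mk_inv_mul_mem_gammaSet_iff (q : A → ℂˣ) (β : B → B → ℂˣ) (a : A) (b : B) :
    (a, a⁻¹ * b) ∈ GammaSet q B β ↔ ∀ c : B, qSigma q c a = β c b := by
  refine ⟨fun ⟨b', hb', h⟩ ↦ ?_, fun h ↦ ⟨b, rfl, h⟩⟩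
  rwa [Subtype.ext (mul_left_cancel hb').symm] at h

theorem fst_mul_snd_mem_of_mem_gammaSet {q : A → ℂˣ} {β : B → B → ℂˣ} {z : A × A}
    (hz : z ∈ GammaSet q B β) : z.1 * z.2 ∈ B := by
  obtain ⟨b, hb, -⟩ := hz
  rw [hb, mul_inv_cancel_left]
  exact b.2

variable {Γ : Subgroup (A × A)}

def gammaIncl (hΓ : ∀ z ∈ Γ, z.1 * z.2 ∈ B) : Γ →* A × B :=
  ((MonoidHom.fst A A).comp Γ.subtype).prod
    ((mulMonoidHom.comp Γ.subtype).codRestrict B fun z ↦ hΓ z z.2)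

theorem gammaIncl_injective (hΓ : ∀ z ∈ Γ, z.1 * z.2 ∈ B) :
    Function.Injective (gammaIncl hΓ) := by
  refine (injective_iff_map_eq_one _).mpr fun z hz ↦ ?_
  have h1 : (z : A × A).1 = 1 := congrArg Prod.fst hz
  have h12 : (z : A × A).1 * (z : A × A).2 = 1 := congrArg (fun x : A × B ↦ (x.2 : A)) hz
  rw [h1, one_mul] at h12
  exact Subtype.ext (Prod.ext h1 h12)

theorem mem_range_gammaIncl_iff (hΓ : ∀ z ∈ Γ, z.1 * z.2 ∈ B) (a : A) (b : B) :
    (a, b) ∈ (gammaIncl hΓ).range ↔ (a, a⁻¹ * b) ∈ Γ := by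
  constructor
  · rintro ⟨⟨z, hz⟩, hzab⟩
    obtain ⟨rfl, rfl⟩ := Prod.ext_iff.mp hzab
    change (z.1, z.1⁻¹ * (z.1 * z.2)) ∈ Γ
    rwa [inv_mul_cancel_left]
  · intro h
    exact ⟨⟨_, h⟩, Prod.ext rfl (Subtype.ext (mul_inv_cancel_left a b))⟩

end Gamma

/-- the short exact sequence `Γ(B,β) → A × B → B̂`, where the first map is
`(u,v) ↦ (u, uv)` and the second sends `(a,b)` to the character `c ↦ σ(c,a) β(c,b)⁻¹`. -/
theorem gamma_ses {A : Type*} [CommGroup A] [Fintype A]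
    (q : A → ℂˣ) (hq : IsQuadratic q) (hnd : IsNondeg q)
    (B : Subgroup A) (β : B → B → ℂˣ) (hβ : IsSchellekens q B β)
    (Γ : Subgroup (A × A)) (hΓ : (Γ : Set (A × A)) = GammaSet q B β) :
    ∃ (ι : Γ →* A × B) (p : (A × B) →* (B →* ℂˣ)),
      (∀ z : Γ, (ι z).1 = (z : A × A).1 ∧
        ((ι z).2 : A) = (z : A × A).1 * (z : A × A).2) ∧
      (∀ (a : A) (b : B) (c : B), p (a, b) c = qSigma q (c : A) a * (β c b)⁻¹) ∧
      Function.Injective ι ∧ Function.Surjective p ∧ ι.range = p.ker := by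
  have hΓB : ∀ z ∈ Γ, z.1 * z.2 ∈ B := fun z hz ↦
    fst_mul_snd_mem_of_mem_gammaSet (hΓ ▸ hz : z ∈ GammaSet q B β)
  refine ⟨gammaIncl hΓB, gammaProj hq hβ, fun _ ↦ ⟨rfl, rfl⟩, gammaProj_apply hq hβ,
    gammaIncl_injective hΓB, gammaProj_surjective hq hnd hβ, ?_⟩
  ext ⟨a, b⟩
  rw [mem_range_gammaIncl_iff, MonoidHom.mem_ker, gammaProj_eq_one_iff, ← SetLike.mem_coe, hΓ,
    mk_inv_mul_mem_gammaSet_iff]
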